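/- arXiv:2505.15511 — 3 statements merged into one kernel-verified Lean document; each statement's English description precedes it below -/
import Mathlib

section
/- Let V be a finite nonempty set, d a positive integer, and θ : V → ℝ^d an embedding. Define the Cauchy kernel q(i,j) = 1 / (1 + ‖θ i − θ j‖²) for i, j ∈ V. Let P be a probability mass function on V × V, let ξ be a probability mass function on V, let n be a positive integer, and let R be a partition of V. For each cell r ∈ R with ξ(r) := Σ_{m∈r} ξ(m) > 0, let ξ_r denote ξ conditioned on r, i.e. ξ_r(m) = ξ(m)/ξ(r) for m ∈ r. Then the InfoNC-t-SNE loss satisfies the exact upper bound: −Σ_{(i,j)} P(i,j) · E_{M ∼ ξ^n} [ log ( q(i,j) / ( q(i,j) + Σ_{k=1}^{n} q(i, M_k) ) ) ] ≤ −Σ_{(i,j)} P(i,j) · log ( q(i,j) / ( q(i,j) + n · Σ_{r∈R, ξ(r)>0} ξ(r) · Σ_{m∈r} ξ_r(m) q(i,m) ) ), where E_{M ∼ ξ^n} denotes expectation over n independent samples M_1,…,M_n each distributed according to ξ. -/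
/-- Let `V` be a finite nonempty set, `d` a positive integer,
`θ : V → ℝ^d` an embedding, and `q i j = 1 / (1 + ‖θ i - θ j‖²)` the Cauchy kernel.
Let `P` be a pmf on `V × V`, `ξ` a pmf on `V`, `n` a positive integer, and `R` a
partition of `V`.  Then the InfoNC-t-SNE loss is bounded above by the loss obtained
by replacing the i.i.d. noise samples with their per-cell conditional expectations
(Jensen's inequality step of the NOMAD Projection derivation). -/
theorem nomad_jensen_upper_bound
    {V : Type*} [Fintype V] [Nonempty V] [DecidableEq V]
    (d : ℕ) (hd : 0 < d) (θ : V → EuclideanSpace ℝ (Fin d))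
    (q : V → V → ℝ) (hq : ∀ i j, q i j = 1 / (1 + ‖θ i - θ j‖ ^ 2))
    (P : V × V → ℝ) (hP0 : ∀ p, 0 ≤ P p) (hP1 : ∑ p : V × V, P p = 1)
    (ξ : V → ℝ) (hξ0 : ∀ m, 0 ≤ ξ m) (hξ1 : ∑ m : V, ξ m = 1)
    (n : ℕ) (hn : 0 < n)
    (R : Finset (Finset V)) (hR : ∀ v : V, ∃! r, r ∈ R ∧ v ∈ r) :
    -∑ p : V × V, P p *
        ∑ M : Fin n → V, (∏ k, ξ (M k)) *
          Real.log (q p.1 p.2 / (q p.1 p.2 + ∑ k, q p.1 (M k))) ≤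
    -∑ p : V × V, P p *
        Real.log (q p.1 p.2 /
          (q p.1 p.2 + n * ∑ r ∈ R.filter (fun r => 0 < ∑ m ∈ r, ξ m),
            (∑ m ∈ r, ξ m) * ∑ m ∈ r, (ξ m / ∑ m' ∈ r, ξ m') * q p.1 m)) := by
  have hqpos : ∀ i j, 0 < q i j := by
    intro i j; rw [hq]; positivity
  -- partition facts
  have hunion : (Finset.univ : Finset V) = R.biUnion id := by
    ext v
    simp only [Finset.mem_univ, true_iff, Finset.mem_biUnion, id]
    obtain ⟨r, hr, _⟩ := hR v
    exact ⟨r, hr.1, hr.2⟩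
  have hdisj : (R : Set (Finset V)).PairwiseDisjoint id := by
    intro r hr s hs hrs
    simp only [Function.onFun, id]
    rw [Finset.disjoint_left]
    intro v hvr hvs
    obtain ⟨u, _, huniq⟩ := hR v
    exact hrs ((huniq r ⟨hr, hvr⟩).trans (huniq s ⟨hs, hvs⟩).symm)
  have hpart : ∀ g : V → ℝ, ∑ r ∈ R, ∑ m ∈ r, g m = ∑ m, g m := by
    intro g
    rw [hunion, Finset.sum_biUnion hdisj]
    rfl
  -- identify the conditional-expectation expression with the plain mean
  have hT : ∀ i : V,
      ∑ r ∈ R.filter (fun r => 0 < ∑ m ∈ r, ξ m),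
        (∑ m ∈ r, ξ m) * ∑ m ∈ r, (ξ m / ∑ m' ∈ r, ξ m') * q i m
      = ∑ m, ξ m * q i m := by
    intro i
    rw [← hpart (fun m => ξ m * q i m), Finset.sum_filter]
    refine Finset.sum_congr rfl fun r _ => ?_
    by_cases hpos : 0 < ∑ m ∈ r, ξ m
    · have hne : (∑ m ∈ r, ξ m) ≠ 0 := hpos.ne'
      simp only [hpos, if_true]
      rw [Finset.mul_sum]
      refine Finset.sum_congr rfl fun m _ => ?_
      field_simp
    · simp only [hpos, if_false]
      have h0 : ∑ m ∈ r, ξ m = 0 :=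
        le_antisymm (not_lt.mp hpos) (Finset.sum_nonneg fun m _ => hξ0 m)
      symm
      refine Finset.sum_eq_zero fun m hm => ?_
      have := (Finset.sum_eq_zero_iff_of_nonneg (fun m _ => hξ0 m)).mp h0 m hm
      simp [this]
  apply neg_le_neg
  refine Finset.sum_le_sum fun p _ => ?_
  refine mul_le_mul_of_nonneg_left ?_ (hP0 p)
  -- weights
  have hw1 : ∑ M : Fin n → V, ∏ k, ξ (M k) = 1 := by
    rw [← Fintype.piFinset_univ,
      Finset.sum_prod_piFinset Finset.univ (fun _ m => ξ m)]
    simp [hξ1]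
  have hmarg : ∀ k : Fin n,
      ∑ M : Fin n → V, (∏ l, ξ (M l)) * q p.1 (M k) = ∑ m, ξ m * q p.1 m := by
    intro k
    have hrw : ∀ M : Fin n → V, (∏ l, ξ (M l)) * q p.1 (M k)
        = ∏ l, (ξ (M l) * if l = k then q p.1 (M l) else 1) := by
      intro M
      rw [Finset.prod_mul_distrib,
        Finset.prod_ite_eq' Finset.univ k (fun l => q p.1 (M l))]
      simp
    simp_rw [hrw]
    rw [← Fintype.piFinset_univ,
      Finset.sum_prod_piFinset Finset.univ
        (fun l m => ξ m * if l = k then q p.1 m else 1),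
      Finset.prod_eq_single k (fun l _ hlk => by simp [hlk, hξ1]) (by simp)]
    simp
  have hS : ∀ M : Fin n → V, 0 < q p.1 p.2 + ∑ k, q p.1 (M k) := by
    intro M
    have h1 := hqpos p.1 p.2
    have h2 : 0 ≤ ∑ k, q p.1 (M k) :=
      Finset.sum_nonneg fun k _ => (hqpos p.1 (M k)).le
    linarith
  have hmean : ∑ M : Fin n → V, (∏ l, ξ (M l)) * (q p.1 p.2 + ∑ k, q p.1 (M k))
      = q p.1 p.2 + n * ∑ m, ξ m * q p.1 m := by
    have h1 : ∀ M : Fin n → V,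
        (∏ l, ξ (M l)) * (q p.1 p.2 + ∑ k, q p.1 (M k))
        = (∏ l, ξ (M l)) * q p.1 p.2 + ∑ k, (∏ l, ξ (M l)) * q p.1 (M k) := by
      intro M; rw [mul_add, Finset.mul_sum]
    simp_rw [h1]
    rw [Finset.sum_add_distrib, ← Finset.sum_mul, hw1, one_mul, Finset.sum_comm]
    simp_rw [hmarg]
    rw [Finset.sum_const, Finset.card_univ, Fintype.card_fin, nsmul_eq_mul]
  have hJ : ∑ M : Fin n → V,
      (∏ l, ξ (M l)) * Real.log (q p.1 p.2 + ∑ k, q p.1 (M k))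
      ≤ Real.log (q p.1 p.2 + n * ∑ m, ξ m * q p.1 m) := by
    have h := strictConcaveOn_log_Ioi.concaveOn.le_map_sum
      (t := Finset.univ) (w := fun M : Fin n → V => ∏ l, ξ (M l))
      (p := fun M : Fin n → V => q p.1 p.2 + ∑ k, q p.1 (M k))
      (fun M _ => Finset.prod_nonneg fun l _ => hξ0 _) hw1 (fun M _ => hS M)
    simp only [smul_eq_mul] at h
    rwa [hmean] at h
  have hTpos : 0 < q p.1 p.2 + n * ∑ m, ξ m * q p.1 m := by
    have h1 := hqpos p.1 p.2
    have h2 : 0 ≤ ∑ m, ξ m * q p.1 m :=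
      Finset.sum_nonneg fun m _ => mul_nonneg (hξ0 m) (hqpos p.1 m).le
    have h3 : (0:ℝ) ≤ (n:ℝ) := Nat.cast_nonneg n
    nlinarith
  rw [hT p.1]
  calc Real.log (q p.1 p.2 / (q p.1 p.2 + n * ∑ m, ξ m * q p.1 m))
      = Real.log (q p.1 p.2)
        - Real.log (q p.1 p.2 + n * ∑ m, ξ m * q p.1 m) :=
        Real.log_div (hqpos _ _).ne' hTpos.ne'
    _ ≤ Real.log (q p.1 p.2)
        - ∑ M : Fin n → V,
            (∏ l, ξ (M l)) * Real.log (q p.1 p.2 + ∑ k, q p.1 (M k)) := by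
        linarith [hJ]
    _ = ∑ M : Fin n → V, (∏ l, ξ (M l)) *
          (Real.log (q p.1 p.2)
            - Real.log (q p.1 p.2 + ∑ k, q p.1 (M k))) := by
        simp_rw [mul_sub]
        rw [Finset.sum_sub_distrib, ← Finset.sum_mul, hw1, one_mul]
    _ = ∑ M : Fin n → V, (∏ l, ξ (M l)) *
          Real.log (q p.1 p.2 / (q p.1 p.2 + ∑ k, q p.1 (M k))) := by
        refine Finset.sum_congr rfl fun M _ => ?_
        rw [Real.log_div (hqpos _ _).ne' (hS M).ne']
end

section
/- Let V be a finite nonempty set, d a positive integer, θ : V → ℝ^d, and q(i,j) = 1/(1 + ‖θ i − θ j‖²). Let P be a probability mass function on V × V, ξ a probability mass function on V, n a positive integer, R a partition of V whose cells all have positive ξ-probability, and R̃ ⊆ R a subset of cells. For each r ∈ R let ξ(r) = Σ_{m∈r} ξ(m), ξ_r the conditional distribution of ξ on r, and μ_r = Σ_{m∈r} ξ_r(m) θ(m) the cell mean. Suppose that θ is constant on every cell r ∈ R̃ (all points of r share the same embedding position). Then −Σ_{(i,j)} P(i,j) E_{M∼ξ^n}[ log( q(i,j)/(q(i,j) + Σ_{k=1}^{n}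 q(i, M_k)) ) ] ≤ −Σ_{(i,j)} P(i,j) log( q(i,j) / ( q(i,j) + n Σ_{r∈R̃} ξ(r) · (1/(1+‖θ i − μ_r‖²)) + n Σ_{r∈R∖R̃} ξ(r) Σ_{m∈r} ξ_r(m) q(i,m) ) ): that is, under this hypothesis the NOMAD Projection loss is an exact upper bound on the InfoNC-t-SNE loss. -/
open Finset

lemma partition_sum {V : Type*} [Fintype V] [DecidableEq V]
    (R : Finset (Finset V)) (hR : ∀ v : V, ∃! r, r ∈ R ∧ v ∈ r) (f : V → ℝ) :
    ∑ r ∈ R, ∑ m ∈ r, f m = ∑ m : V, f m := by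
  rw [← Finset.sum_biUnion]
  · congr 1
    ext v
    simp only [Finset.mem_biUnion, Finset.mem_univ, iff_true]
    obtain ⟨r, ⟨hr, hv⟩, _⟩ := hR v
    exact ⟨r, hr, hv⟩
  · intro r hr s hs hrs
    refine Finset.disjoint_left.mpr fun v hvr hvs => hrs ?_
    obtain ⟨u, _, hu⟩ := hR v
    exact (hu r ⟨hr, hvr⟩).trans (hu s ⟨hs, hvs⟩).symm

lemma iid_sum {V : Type*} [Fintype V] [DecidableEq V]
    (ξ : V → ℝ) (hξ1 : ∑ m : V, ξ m = 1) (n : ℕ) (g : V → ℝ) :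
    ∑ M : Fin n → V, (∏ k, ξ (M k)) * ∑ k, g (M k)
      = n * ∑ m, ξ m * g m := by
  have key : ∀ k : Fin n, ∑ M : Fin n → V, (∏ j, ξ (M j)) * g (M k)
      = ∑ m, ξ m * g m := by
    intro k
    have h1 : ∀ M : Fin n → V, (∏ j, ξ (M j)) * g (M k)
        = ∏ j, (ξ (M j) * if j = k then g (M j) else 1) := by
      intro M
      rw [Finset.prod_mul_distrib, Finset.prod_ite_eq' Finset.univ k (fun j => g (M j))]
      simp
    simp_rw [h1]
    rw [← Fintype.prod_sum (fun j m => ξ m * if j = k then g m else 1)]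
    have h2 : ∀ j : Fin n, (∑ m, ξ m * if j = k then g m else 1)
        = if j = k then ∑ m, ξ m * g m else 1 := by
      intro j
      split_ifs with h <;> simp [hξ1]
    simp_rw [h2]
    rw [Finset.prod_ite_eq' Finset.univ k (fun _ => ∑ m, ξ m * g m)]
    simp
  simp_rw [Finset.mul_sum]
  rw [Finset.sum_comm]
  simp_rw [key]
  rw [Finset.sum_const, Finset.card_univ, Fintype.card_fin, nsmul_eq_mul, Finset.mul_sum]

lemma weights_one {V : Type*} [Fintype V] [DecidableEq V]
    (ξ : V → ℝ) (hξ1 : ∑ m : V, ξ m = 1) (n : ℕ) :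
    ∑ M : Fin n → V, (∏ k, ξ (M k)) = 1 := by
  rw [← Fintype.sum_pow ξ n, hξ1, one_pow]


/-- With the Cauchy kernel `q i j = 1/(1 + ‖θ i − θ j‖²)`, a pmf
`P` on `V × V`, a pmf `ξ` on `V`, `n` i.i.d. noise samples, a partition `R` of `V`
into cells of positive `ξ`-probability, approximated cells `Rt ⊆ R` with cell means
`μ r = Σ_{m∈r} ξ_r m • θ m`: if `θ` is constant on every cell of `Rt`, then the
NOMAD Projection loss is an exact upper bound on the InfoNC-t-SNE loss. -/
theorem nomad_loss_exact_upper_bound_of_constant_cells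
    {V : Type*} [Fintype V] [Nonempty V] [DecidableEq V]
    (d : ℕ) (hd : 0 < d) (θ : V → EuclideanSpace ℝ (Fin d))
    (q : V → V → ℝ) (hq : ∀ i j, q i j = 1 / (1 + ‖θ i - θ j‖ ^ 2))
    (P : V × V → ℝ) (hP0 : ∀ p, 0 ≤ P p) (hP1 : ∑ p : V × V, P p = 1)
    (ξ : V → ℝ) (hξ0 : ∀ m, 0 ≤ ξ m) (hξ1 : ∑ m : V, ξ m = 1)
    (n : ℕ) (hn : 0 < n)
    (R : Finset (Finset V)) (hR : ∀ v : V, ∃! r, r ∈ R ∧ v ∈ r)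
    (hRpos : ∀ r ∈ R, 0 < ∑ m ∈ r, ξ m)
    (Rt : Finset (Finset V)) (hRt : Rt ⊆ R)
    (μ : Finset V → EuclideanSpace ℝ (Fin d))
    (hμ : ∀ r ∈ R, μ r = ∑ m ∈ r, (ξ m / ∑ m' ∈ r, ξ m') • θ m)
    (hconst : ∀ r ∈ Rt, ∀ m ∈ r, ∀ m' ∈ r, θ m = θ m') :
    -∑ p : V × V, P p *
        ∑ M : Fin n → V, (∏ k, ξ (M k)) *
          Real.log (q p.1 p.2 / (q p.1 p.2 + ∑ k, q p.1 (M k))) ≤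
    -∑ p : V × V, P p *
        Real.log (q p.1 p.2 /
          (q p.1 p.2
            + n * ∑ r ∈ Rt, (∑ m ∈ r, ξ m) * (1 / (1 + ‖θ p.1 - μ r‖ ^ 2))
            + n * ∑ r ∈ R \ Rt,
                (∑ m ∈ r, ξ m) * ∑ m ∈ r, (ξ m / ∑ m' ∈ r, ξ m') * q p.1 m)) := by
  have qpos : ∀ a b, 0 < q a b := by
    intro a b; rw [hq]; positivity
  apply neg_le_neg
  apply Finset.sum_le_sum
  intro p _
  refine mul_le_mul_of_nonneg_left ?_ (hP0 p)
  set i := p.1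
  set j := p.2
  set c := q i j with hc
  have hcpos : 0 < c := qpos i j
  set A := ∑ m, ξ m * q i m with hA
  have hA0 : 0 ≤ A := Finset.sum_nonneg fun m _ => mul_nonneg (hξ0 m) (qpos i m).le
  -- denominator identity
  have hcell_t : ∀ r ∈ Rt,
      (∑ m ∈ r, ξ m) * (1 / (1 + ‖θ i - μ r‖ ^ 2)) = ∑ m ∈ r, ξ m * q i m := by
    intro r hr
    have hrR := hRt hr
    have hs := hRpos r hrR
    have hne : r.Nonempty := by
      rcases r.eq_empty_or_nonempty with h | h
      · exfalso; rw [h] at hs; simp at hs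
      · exact h
    obtain ⟨m0, hm0⟩ := hne
    have hμr : μ r = θ m0 := by
      rw [hμ r hrR]
      have : ∀ m ∈ r, (ξ m / ∑ m' ∈ r, ξ m') • θ m
          = (ξ m / ∑ m' ∈ r, ξ m') • θ m0 := fun m hm => by
        rw [hconst r hr m hm m0 hm0]
      rw [Finset.sum_congr rfl this, ← Finset.sum_smul, ← Finset.sum_div,
        div_self hs.ne', one_smul]
    have hqi : ∀ m ∈ r, q i m = q i m0 := fun m hm => by
      rw [hq, hq, hconst r hr m hm m0 hm0]
    calc (∑ m ∈ r, ξ m) * (1 / (1 + ‖θ i - μ r‖ ^ 2))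
        = (∑ m ∈ r, ξ m) * q i m0 := by rw [hμr, ← hq]
      _ = ∑ m ∈ r, ξ m * q i m0 := by rw [Finset.sum_mul]
      _ = ∑ m ∈ r, ξ m * q i m := by
          refine Finset.sum_congr rfl fun m hm => ?_
          rw [hqi m hm]
  have hcell_nt : ∀ r ∈ R \ Rt,
      (∑ m ∈ r, ξ m) * ∑ m ∈ r, (ξ m / ∑ m' ∈ r, ξ m') * q i m
        = ∑ m ∈ r, ξ m * q i m := by
    intro r hr
    have hs := hRpos r (Finset.mem_sdiff.mp hr).1
    rw [Finset.mul_sum]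
    refine Finset.sum_congr rfl fun m hm => ?_
    field_simp
  have hD : (↑n * ∑ r ∈ Rt, (∑ m ∈ r, ξ m) * (1 / (1 + ‖θ i - μ r‖ ^ 2))
      + ↑n * ∑ r ∈ R \ Rt,
          (∑ m ∈ r, ξ m) * ∑ m ∈ r, (ξ m / ∑ m' ∈ r, ξ m') * q i m)
      = ↑n * A := by
    rw [Finset.sum_congr rfl hcell_t, Finset.sum_congr rfl hcell_nt, ← mul_add,
      add_comm (∑ r ∈ Rt, _), Finset.sum_sdiff hRt, partition_sum R hR, hA]
  -- Jensen
  have hSpos : ∀ M : Fin n → V, 0 < c + ∑ k, q i (M k) := by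
    intro M
    have : 0 ≤ ∑ k, q i (M k) := Finset.sum_nonneg fun k _ => (qpos i (M k)).le
    linarith
  have hw0 : ∀ M : Fin n → V, (0:ℝ) ≤ ∏ k, ξ (M k) :=
    fun M => Finset.prod_nonneg fun k _ => hξ0 (M k)
  have hw1 := weights_one ξ hξ1 n
  have hjensen : ∑ M : Fin n → V, (∏ k, ξ (M k)) • Real.log (c + ∑ k, q i (M k))
      ≤ Real.log (∑ M : Fin n → V, (∏ k, ξ (M k)) • (c + ∑ k, q i (M k))) :=
    strictConcaveOn_log_Ioi.concaveOn.le_map_sum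
      (fun M _ => hw0 M) hw1 (fun M _ => hSpos M)
  have hmean : (∑ M : Fin n → V, (∏ k, ξ (M k)) • (c + ∑ k, q i (M k)))
      = c + ↑n * A := by
    simp_rw [smul_eq_mul, mul_add]
    rw [Finset.sum_add_distrib, ← Finset.sum_mul, hw1, one_mul,
      iid_sum ξ hξ1 n (fun m => q i m)]
  rw [hmean] at hjensen
  simp_rw [smul_eq_mul] at hjensen
  -- rewrite logs
  have hcnA : 0 < c + ↑n * A := by positivity
  have hrhs : Real.log (c / (c + ↑n * ∑ r ∈ Rt, (∑ m ∈ r, ξ m) * (1 / (1 + ‖θ i - μ r‖ ^ 2))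
      + ↑n * ∑ r ∈ R \ Rt, (∑ m ∈ r, ξ m) * ∑ m ∈ r, (ξ m / ∑ m' ∈ r, ξ m') * q i m))
      = Real.log c - Real.log (c + ↑n * A) := by
    rw [add_assoc, hD, Real.log_div hcpos.ne' hcnA.ne']
  have hlhs : ∀ M : Fin n → V,
      Real.log (c / (c + ∑ k, q i (M k)))
        = Real.log c - Real.log (c + ∑ k, q i (M k)) := fun M =>
    Real.log_div hcpos.ne' (hSpos M).ne'
  calc Real.log (c / (c + ↑n * ∑ r ∈ Rt, (∑ m ∈ r, ξ m) * (1 / (1 + ‖θ i - μ r‖ ^ 2))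
        + ↑n * ∑ r ∈ R \ Rt, (∑ m ∈ r, ξ m) * ∑ m ∈ r, (ξ m / ∑ m' ∈ r, ξ m') * q i m))
      = Real.log c - Real.log (c + ↑n * A) := hrhs
    _ ≤ Real.log c - ∑ M : Fin n → V, (∏ k, ξ (M k)) * Real.log (c + ∑ k, q i (M k)) := by
        linarith
    _ = ∑ M : Fin n → V, (∏ k, ξ (M k)) *
          (Real.log c - Real.log (c + ∑ k, q i (M k))) := by
        simp_rw [mul_sub]
        rw [Finset.sum_sub_distrib, ← Finset.sum_mul, hw1, one_mul]
    _ = ∑ M : Fin n → V, (∏ k, ξ (M k)) *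
          Real.log (c / (c + ∑ k, q i (M k))) := by
        refine Finset.sum_congr rfl fun M _ => ?_
        rw [hlhs M]
end

section
/- Let V be a finite nonempty set, d a positive integer, θ : V → ℝ^d, and q(i,j) = 1/(1 + ‖θ i − θ j‖²). Let P be a probability mass function on V × V, ξ a probability mass function on V, n a positive integer, R a partition of V whose cells all have positive ξ-probability, and R̃ ⊆ R. For r ∈ R let ξ(r) = Σ_{m∈r} ξ(m), ξ_r the conditional distribution of ξ on r, and μ_r = Σ_{m∈r} ξ_r(m) θ(m). Suppose L ≥ 0 is such that for every i ∈ V the gradient of the map y ↦ 1/(1 + ‖θ i − y‖²) on ℝ^d is Lipschitz with constant L. Then −Σ_{(i,j)} P(i,j) E_{M∼ξ^n}[ log( q(i,j)/(q(i,j) + Σ_{k=1}^{n} q(i,M_k)) ) ] ≤ −Σ_{(i,j)} P(i,j) log( q(i,j) / ( q(i,j) + n Σ_{r∈R̃} ξ(r)·(1/(1+‖θ i − μ_r‖²)) + n Σ_{r∈R∖R̃} ξ(r) Σ_{m∈r} ξ_r(m) q(i,m) ) ) + (nL/2) · Σ_{(i,j)} P(i,j) · ( Σ_{r∈R̃} ξ(r)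 Σ_{m∈r} ξ_r(m) ‖θ(m) − μ_r‖² ) / q(i,j). -/
/-!
Conditioned on the positive pair `(i, j)`, the loss depends on the noise only through
`s = ∑ₖ q i Mₖ`, via the concave function `s ↦ log ((q i j + s) / q i j)`; by Jensen the
expected loss is at most its value at the expected noise `n * ∑ₘ ξ m * q i m`. Split this mean
over the cells of the partition. On an approximated cell `r`, expand the `L`-smooth kernel
`y ↦ 1 / (1 + ‖θ i - y‖²)` around the cell mean `μ r`: the first-order term averages to zero,
so the cell's contribution is at most its mass times the kernel at `μ r`, plus `L / 2` times
its second moment. Finally `log (D + ε) ≤ log D + ε / D ≤ log D + ε / q i j` moves this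
additive error out of the logarithm.
-/

open Finset Real
open scoped RealInnerProductSpace

section FiniteSums

variable {ι : Type*}

theorem sum_eq_sum_sum_of_existsUnique_mem [Fintype ι] {M : Type*} [AddCommMonoid M]
    {R : Finset (Finset ι)} (hR : ∀ i, ∃! r, r ∈ R ∧ i ∈ r) (g : ι → M) :
    ∑ i, g i = ∑ r ∈ R, ∑ i ∈ r, g i := by
  classical
  have hdisj : (R : Set (Finset ι)).PairwiseDisjoint id := fun r hr r' hr' hne =>
    disjoint_left.mpr fun i hir hir' => hne ((hR i).unique ⟨hr, hir⟩ ⟨hr', hir'⟩)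
  have huniv : (univ : Finset ι) = R.biUnion id := by
    ext i
    obtain ⟨r, ⟨hr, hir⟩, -⟩ := hR i
    simpa using ⟨r, hr, hir⟩
  rw [huniv, sum_biUnion hdisj]
  rfl

theorem sum_mul_sum_div_sum_mul {s : Finset ι} {w : ι → ℝ} (hw : ∑ i ∈ s, w i ≠ 0)
    (g : ι → ℝ) :
    (∑ i ∈ s, w i) * ∑ i ∈ s, (w i / ∑ j ∈ s, w j) * g i = ∑ i ∈ s, w i * g i := by
  simp_rw [mul_sum, div_mul_eq_mul_div, mul_div_assoc', mul_div_cancel_left₀ _ hw]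

variable {V R : Type*} [Fintype ι] [DecidableEq ι] [Fintype V] [CommSemiring R]

theorem sum_prod_apply_eq_one {ξ : V → R} (hξ : ∑ v, ξ v = 1) :
    ∑ M : ι → V, ∏ k, ξ (M k) = 1 := by
  rw [← Fintype.prod_sum fun _ => ξ, hξ, prod_const_one]

theorem sum_prod_apply_mul_apply {ξ : V → R} (hξ : ∑ v, ξ v = 1) (g : V → R) (k : ι) :
    ∑ M : ι → V, (∏ k', ξ (M k')) * g (M k) = ∑ v, ξ v * g v :=
  calc ∑ M : ι → V, (∏ k', ξ (M k')) * g (M k)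
      = ∑ M : ι → V, ∏ k', ξ (M k') * if k' = k then g (M k') else 1 :=
        sum_congr rfl fun M _ => by rw [prod_mul_distrib, Fintype.prod_ite_eq']
    _ = ∏ k', ∑ v, ξ v * if k' = k then g v else 1 :=
        (Fintype.prod_sum fun k' v => ξ v * if k' = k then g v else 1).symm
    _ = ∑ v, ξ v * g v := by
        rw [Fintype.prod_eq_single k fun k' hk' => by simp [hk', hξ]]
        simp

theorem sum_prod_apply_mul_sum_apply {ξ : V → R} (hξ : ∑ v, ξ v = 1) (g : V → R) :
    ∑ M : ι → V, (∏ k, ξ (M k)) * ∑ k, g (M k) = Fintype.card ι * ∑ v, ξ v * g v :=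
  calc ∑ M : ι → V, (∏ k, ξ (M k)) * ∑ k, g (M k)
      = ∑ k, ∑ M : ι → V, (∏ k', ξ (M k')) * g (M k) := by simp_rw [mul_sum]; exact sum_comm
    _ = Fintype.card ι * ∑ v, ξ v * g v := by simp [sum_prod_apply_mul_apply hξ]

end FiniteSums

section Smooth

variable {E : Type*} [NormedAddCommGroup E] [InnerProductSpace ℝ E]

theorem le_add_inner_gradient_add_of_lipschitz_gradient [CompleteSpace E] {f : E → ℝ}
    (hf : Differentiable ℝ f) {L : ℝ}
    (hlip : ∀ a b, ‖gradient f a - gradient f b‖ ≤ L * ‖a - b‖) (x y : E) :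
    f y ≤ f x + ⟪gradient f x, y - x⟫ + L / 2 * ‖y - x‖ ^ 2 := by
  set v := y - x
  set c := ⟪gradient f x, v⟫
  -- `g' t = ⟪∇f (x + t • v) - ∇f x, v⟫ - L t ‖v‖² ≤ 0` on `[0, 1]`, so `g 1 ≤ g 0`
  let g : ℝ → ℝ := fun t => f (x + t • v) - t * c - L / 2 * ‖v‖ ^ 2 * t ^ 2
  have hg : ∀ t, HasDerivAt g
      (⟪gradient f (x + t • v), v⟫ - c - L / 2 * ‖v‖ ^ 2 * (2 * t)) t := by
    intro t
    have hline : HasDerivAt (fun s : ℝ => x + s • v) v t := by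
      simpa using ((hasDerivAt_id t).smul_const v).const_add x
    have hfline : HasDerivAt (fun s : ℝ => f (x + s • v)) ⟪gradient f (x + t • v), v⟫ t := by
      simpa [Function.comp_def] using
        (hasGradientAt_iff_hasFDerivAt.mp (hf _).hasGradientAt).comp_hasDerivAt t hline
    refine ((hfline.sub ((hasDerivAt_id t).mul_const c)).sub
      ((hasDerivAt_pow 2 t).const_mul (L / 2 * ‖v‖ ^ 2))).congr_deriv ?_
    norm_num
  have hanti : AntitoneOn g (Set.Icc 0 1) := by
    refine antitoneOn_of_deriv_nonpos (convex_Icc 0 1)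
      (fun t _ => (hg t).continuousAt.continuousWithinAt)
      (fun t _ => (hg t).differentiableAt.differentiableWithinAt) fun t ht => ?_
    rw [interior_Icc] at ht
    have hinner : ⟪gradient f (x + t • v) - gradient f x, v⟫ ≤ L * t * ‖v‖ ^ 2 :=
      calc ⟪gradient f (x + t • v) - gradient f x, v⟫
          ≤ ‖gradient f (x + t • v) - gradient f x‖ * ‖v‖ := real_inner_le_norm _ _
        _ ≤ L * ‖(x + t • v) - x‖ * ‖v‖ := by gcongr; exact hlip _ _
        _ = L * t * ‖v‖ ^ 2 := by
          rw [add_sub_cancel_left, norm_smul, Real.norm_of_nonneg ht.1.le]; ring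
    rw [inner_sub_left] at hinner
    rw [(hg t).deriv]
    linarith
  have h10 : g 1 ≤ g 0 :=
    hanti (Set.left_mem_Icc.mpr zero_le_one) (Set.right_mem_Icc.mpr zero_le_one) zero_le_one
  simp only [g, v, zero_smul, one_smul, add_zero, add_sub_cancel] at h10
  linarith

theorem differentiable_one_div_one_add_norm_sub_sq (c : E) :
    Differentiable ℝ fun y : E => 1 / (1 + ‖c - y‖ ^ 2) := by
  simp_rw [one_div]
  exact Differentiable.inv ((differentiable_const (1 : ℝ)).add
    (Differentiable.norm_sq ℝ ((differentiable_const c).sub differentiable_id)))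
    fun y => (by positivity : (0 : ℝ) < 1 + ‖c - y‖ ^ 2).ne'

variable {ι : Type*}

theorem sum_smul_sub_eq_zero_of_eq_sum_div_smul {s : Finset ι} {w : ι → ℝ} {x : ι → E}
    {c : E} (hw : ∑ i ∈ s, w i ≠ 0) (hc : c = ∑ i ∈ s, (w i / ∑ j ∈ s, w j) • x i) :
    ∑ i ∈ s, w i • (x i - c) = 0 := by
  simp_rw [smul_sub, sum_sub_distrib, ← sum_smul, hc, smul_sum, smul_smul,
    mul_div_cancel₀ _ hw, sub_self]

variable [CompleteSpace E] {f : E → ℝ} {L : ℝ}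

theorem sum_mul_le_of_lipschitz_gradient (hf : Differentiable ℝ f)
    (hlip : ∀ a b, ‖gradient f a - gradient f b‖ ≤ L * ‖a - b‖) {s : Finset ι} {w : ι → ℝ}
    (hw : ∀ i ∈ s, 0 ≤ w i) {x : ι → E} {c : E} (hc : ∑ i ∈ s, w i • (x i - c) = 0) :
    ∑ i ∈ s, w i * f (x i) ≤
      (∑ i ∈ s, w i) * f c + L / 2 * ∑ i ∈ s, w i * ‖x i - c‖ ^ 2 :=
  calc ∑ i ∈ s, w i * f (x i)
      ≤ ∑ i ∈ s, w i * (f c + ⟪gradient f c, x i - c⟫ + L / 2 * ‖x i - c‖ ^ 2) :=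
        sum_le_sum fun i hi => mul_le_mul_of_nonneg_left
          (le_add_inner_gradient_add_of_lipschitz_gradient hf hlip c (x i)) (hw i hi)
    _ = (∑ i ∈ s, w i) * f c + ⟪gradient f c, ∑ i ∈ s, w i • (x i - c)⟫
          + L / 2 * ∑ i ∈ s, w i * ‖x i - c‖ ^ 2 := by
        simp only [mul_add, sum_add_distrib, sum_mul, mul_sum, inner_sum, real_inner_smul_right]
        exact congrArg _ (sum_congr rfl fun i _ => mul_left_comm _ _ _)
    _ = (∑ i ∈ s, w i) * f c + L / 2 * ∑ i ∈ s, w i * ‖x i - c‖ ^ 2 := by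
        rw [hc, inner_zero_right, add_zero]

theorem sum_mul_le_of_lipschitz_gradient_of_partition [Fintype ι] [DecidableEq ι]
    (hf : Differentiable ℝ f) (hlip : ∀ a b, ‖gradient f a - gradient f b‖ ≤ L * ‖a - b‖)
    (x : ι → E) {ξ : ι → ℝ} (hξ : ∀ i, 0 ≤ ξ i) {R Rt : Finset (Finset ι)}
    (hR : ∀ i, ∃! r, r ∈ R ∧ i ∈ r) (hRpos : ∀ r ∈ R, 0 < ∑ i ∈ r, ξ i) (hRt : Rt ⊆ R)
    {μ : Finset ι → E} (hμ : ∀ r ∈ Rt, μ r = ∑ i ∈ r, (ξ i / ∑ j ∈ r, ξ j) • x i) :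
    ∑ i, ξ i * f (x i) ≤
      ∑ r ∈ Rt, (∑ i ∈ r, ξ i) * f (μ r)
        + ∑ r ∈ R \ Rt, (∑ i ∈ r, ξ i) * ∑ i ∈ r, (ξ i / ∑ j ∈ r, ξ j) * f (x i)
        + L / 2 * ∑ r ∈ Rt, (∑ i ∈ r, ξ i) *
            ∑ i ∈ r, (ξ i / ∑ j ∈ r, ξ j) * ‖x i - μ r‖ ^ 2 := by
  have hne : ∀ r ∈ R, ∑ i ∈ r, ξ i ≠ 0 := fun r hr => (hRpos r hr).ne'
  have hcells : ∑ r ∈ Rt, ∑ i ∈ r, ξ i * f (x i) ≤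
      ∑ r ∈ Rt, ((∑ i ∈ r, ξ i) * f (μ r) + L / 2 * ∑ i ∈ r, ξ i * ‖x i - μ r‖ ^ 2) :=
    sum_le_sum fun r hr => sum_mul_le_of_lipschitz_gradient hf hlip (fun i _ => hξ i)
      (sum_smul_sub_eq_zero_of_eq_sum_div_smul (hne r (hRt hr)) (hμ r hr))
  rw [sum_add_distrib] at hcells
  rw [sum_eq_sum_sum_of_existsUnique_mem hR, ← sum_sdiff hRt,
    sum_congr rfl fun r hr => sum_mul_sum_div_sum_mul (hne r (mem_sdiff.mp hr).1) _,
    sum_congr rfl fun r hr => sum_mul_sum_div_sum_mul (hne r (hRt hr)) _, mul_sum]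
  linarith

end Smooth

theorem neg_sum_mul_log_div_add_le {Ω : Type*} (s : Finset Ω) {w S : Ω → ℝ}
    (hw : ∀ i ∈ s, 0 ≤ w i) (hw1 : ∑ i ∈ s, w i = 1) (hS : ∀ i ∈ s, 0 ≤ S i) {a : ℝ}
    (ha : 0 < a) :
    -∑ i ∈ s, w i * log (a / (a + S i)) ≤ -log (a / (a + ∑ i ∈ s, w i * S i)) := by
  have hneg : ∀ x, -log (a / (a + x)) = log ((a + x) / a) := fun x => by
    rw [← log_inv, inv_div]
  have hjensen := strictConcaveOn_log_Ioi.concaveOn.le_map_sum hw hw1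
    (p := fun i => (a + S i) / a) fun i hi => Set.mem_Ioi.mpr (by have := hS i hi; positivity)
  have hmean : ∑ i ∈ s, w i * ((a + S i) / a) = (a + ∑ i ∈ s, w i * S i) / a := by
    simp only [mul_div_assoc', ← sum_div, mul_add, sum_add_distrib, ← sum_mul, hw1, one_mul]
  simp only [smul_eq_mul, hmean] at hjensen
  rw [hneg, ← sum_neg_distrib]
  simpa only [← mul_neg, hneg] using hjensen

theorem neg_log_div_add_le {a S Z e : ℝ} (ha : 0 < a) (hS : 0 ≤ S) (hZ : 0 ≤ Z) (he : 0 ≤ e)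
    (hSZ : S ≤ Z + e) : -log (a / (a + S)) ≤ -log (a / (a + Z)) + e / a := by
  have haZ : 0 < a + Z := by positivity
  have hshift : log (a + Z + e) - log (a + Z) ≤ e / (a + Z) := by
    rw [← log_div (by positivity) haZ.ne']
    calc log ((a + Z + e) / (a + Z)) ≤ (a + Z + e) / (a + Z) - 1 :=
          log_le_sub_one_of_pos (by positivity)
      _ = e / (a + Z) := by field_simp; ring
  have hmono : log (a + S) ≤ log (a + Z + e) := log_le_log (by positivity) (by linarith)
  have hdenom : e / (a + Z) ≤ e / a := div_le_div_of_nonneg_left he ha (by linarith)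
  rw [log_div ha.ne' (by positivity), log_div ha.ne' haZ.ne']
  linarith

theorem neg_sum_mul_log_div_add_le_of_sum_mul_le {Ω : Type*} (s : Finset Ω) {w S : Ω → ℝ}
    (hw : ∀ i ∈ s, 0 ≤ w i) (hw1 : ∑ i ∈ s, w i = 1) (hS : ∀ i ∈ s, 0 ≤ S i) {a Z e : ℝ}
    (ha : 0 < a) (hZ : 0 ≤ Z) (he : 0 ≤ e) (hmean : ∑ i ∈ s, w i * S i ≤ Z + e) :
    -∑ i ∈ s, w i * log (a / (a + S i)) ≤ -log (a / (a + Z)) + e / a :=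
  (neg_sum_mul_log_div_add_le s hw hw1 hS ha).trans <|
    neg_log_div_add_le ha (sum_nonneg fun i hi => mul_nonneg (hw i hi) (hS i hi)) hZ he hmean

theorem nomad_loss_approximate_upper_bound_general
    {V : Type*} [Fintype V] [DecidableEq V]
    (d : ℕ) (θ : V → EuclideanSpace ℝ (Fin d))
    (q : V → V → ℝ) (hq : ∀ i j, q i j = 1 / (1 + ‖θ i - θ j‖ ^ 2))
    (P : V × V → ℝ) (hP0 : ∀ p, 0 ≤ P p)
    (ξ : V → ℝ) (hξ0 : ∀ m, 0 ≤ ξ m) (hξ1 : ∑ m : V, ξ m = 1)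
    (n : ℕ)
    (R : Finset (Finset V)) (hR : ∀ v : V, ∃! r, r ∈ R ∧ v ∈ r)
    (hRpos : ∀ r ∈ R, 0 < ∑ m ∈ r, ξ m)
    (Rt : Finset (Finset V)) (hRt : Rt ⊆ R)
    (μ : Finset V → EuclideanSpace ℝ (Fin d))
    (hμ : ∀ r ∈ R, μ r = ∑ m ∈ r, (ξ m / ∑ m' ∈ r, ξ m') • θ m)
    (L : ℝ) (hL : 0 ≤ L)
    (hlip : ∀ i : V, ∀ y₁ y₂ : EuclideanSpace ℝ (Fin d),
      ‖gradient (fun y => 1 / (1 + ‖θ i - y‖ ^ 2)) y₁ -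
          gradient (fun y => 1 / (1 + ‖θ i - y‖ ^ 2)) y₂‖ ≤ L * ‖y₁ - y₂‖) :
    -∑ p : V × V, P p *
        ∑ M : Fin n → V, (∏ k, ξ (M k)) *
          Real.log (q p.1 p.2 / (q p.1 p.2 + ∑ k, q p.1 (M k))) ≤
    (-∑ p : V × V, P p *
        Real.log (q p.1 p.2 /
          (q p.1 p.2
            + n * ∑ r ∈ Rt, (∑ m ∈ r, ξ m) * (1 / (1 + ‖θ p.1 - μ r‖ ^ 2))
            + n * ∑ r ∈ R \ Rt,
                (∑ m ∈ r, ξ m) * ∑ m ∈ r, (ξ m / ∑ m' ∈ r, ξ m') * q p.1 m)))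
      + (n * L / 2) * ∑ p : V × V, P p *
          ((∑ r ∈ Rt, (∑ m ∈ r, ξ m) *
              ∑ m ∈ r, (ξ m / ∑ m' ∈ r, ξ m') * ‖θ m - μ r‖ ^ 2) / q p.1 p.2) := by
  have hq_pos : ∀ i j, 0 < q i j := fun i j => by rw [hq]; positivity
  have hmass : ∀ r : Finset V, 0 ≤ ∑ m ∈ r, ξ m := fun r => sum_nonneg fun m _ => hξ0 m
  have hcond : ∀ (r : Finset V) m, 0 ≤ ξ m / ∑ m' ∈ r, ξ m' :=
    fun r m => div_nonneg (hξ0 m) (hmass r)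
  obtain ⟨X, hX⟩ : ∃ X : V → ℝ,
      ∀ i, X i = ∑ r ∈ Rt, (∑ m ∈ r, ξ m) * (1 / (1 + ‖θ i - μ r‖ ^ 2)) := ⟨_, fun _ => rfl⟩
  obtain ⟨Y, hY⟩ : ∃ Y : V → ℝ, ∀ i, Y i =
      ∑ r ∈ R \ Rt, (∑ m ∈ r, ξ m) * ∑ m ∈ r, (ξ m / ∑ m' ∈ r, ξ m') * q i m :=
    ⟨_, fun _ => rfl⟩
  obtain ⟨C, hC⟩ : ∃ C : ℝ, C =
      ∑ r ∈ Rt, (∑ m ∈ r, ξ m) * ∑ m ∈ r, (ξ m / ∑ m' ∈ r, ξ m') * ‖θ m - μ r‖ ^ 2 :=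
    ⟨_, rfl⟩
  simp only [← hX, ← hY, ← hC]
  have hXY : ∀ i, 0 ≤ n * X i + n * Y i := fun i => by
    have : 0 ≤ X i := hX i ▸ sum_nonneg fun r _ => mul_nonneg (hmass r) (by positivity)
    have : 0 ≤ Y i := hY i ▸ sum_nonneg fun r _ =>
      mul_nonneg (hmass r) (sum_nonneg fun m _ => mul_nonneg (hcond r m) (hq_pos i m).le)
    positivity
  have hC0 : 0 ≤ C := hC ▸ sum_nonneg fun r _ =>
    mul_nonneg (hmass r) (sum_nonneg fun m _ => mul_nonneg (hcond r m) (by positivity))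
  have hkernel_mean : ∀ i, ∑ m, ξ m * q i m ≤ X i + Y i + L / 2 * C := fun i => by
    simpa only [← hq, ← hX, ← hY, ← hC] using sum_mul_le_of_lipschitz_gradient_of_partition
      (differentiable_one_div_one_add_norm_sub_sq (θ i)) (hlip i) θ hξ0 hR hRpos hRt
      fun r hr => hμ r (hRt hr)
  have hpair : ∀ i j, -∑ M : Fin n → V, (∏ k, ξ (M k)) *
      Real.log (q i j / (q i j + ∑ k, q i (M k))) ≤
      -Real.log (q i j / (q i j + n * X i + n * Y i)) + n * L / 2 * (C / q i j) := by
    intro i j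
    rw [add_assoc, mul_div_assoc']
    refine neg_sum_mul_log_div_add_le_of_sum_mul_le univ
      (fun M _ => prod_nonneg fun k _ => hξ0 (M k)) (sum_prod_apply_eq_one hξ1)
      (fun M _ => sum_nonneg fun k _ => (hq_pos i (M k)).le) (hq_pos i j) (hXY i)
      (by positivity) ?_
    rw [sum_prod_apply_mul_sum_apply hξ1, Fintype.card_fin]
    linear_combination (n : ℝ) * hkernel_mean i
  have := sum_le_sum fun p (_ : p ∈ univ) => mul_le_mul_of_nonneg_left (hpair p.1 p.2) (hP0 p)
  simpa only [mul_add, mul_neg, sum_add_distrib, sum_neg_distrib, mul_sum,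
    mul_left_comm (P _)] using this

/-- With the Cauchy kernel `q i j = 1/(1 + ‖θ i − θ j‖²)`, a pmf
`P` on `V × V`, a pmf `ξ` on `V`, `n` i.i.d. noise samples, a partition `R` of `V`
into cells of positive `ξ`-probability, approximated cells `Rt ⊆ R` with cell means
`μ r`, and `L ≥ 0` a Lipschitz constant for the gradient of `y ↦ 1/(1 + ‖θ i − y‖²)`
for every `i`: the InfoNC-t-SNE loss is bounded by the NOMAD Projection loss plus an
explicit second-order error term controlled by the within-cell second moments. -/
theorem nomad_loss_approximate_upper_bound
    {V : Type*} [Fintype V] [Nonempty V] [DecidableEq V]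
    (d : ℕ) (hd : 0 < d) (θ : V → EuclideanSpace ℝ (Fin d))
    (q : V → V → ℝ) (hq : ∀ i j, q i j = 1 / (1 + ‖θ i - θ j‖ ^ 2))
    (P : V × V → ℝ) (hP0 : ∀ p, 0 ≤ P p) (hP1 : ∑ p : V × V, P p = 1)
    (ξ : V → ℝ) (hξ0 : ∀ m, 0 ≤ ξ m) (hξ1 : ∑ m : V, ξ m = 1)
    (n : ℕ) (hn : 0 < n)
    (R : Finset (Finset V)) (hR : ∀ v : V, ∃! r, r ∈ R ∧ v ∈ r)
    (hRpos : ∀ r ∈ R, 0 < ∑ m ∈ r, ξ m)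
    (Rt : Finset (Finset V)) (hRt : Rt ⊆ R)
    (μ : Finset V → EuclideanSpace ℝ (Fin d))
    (hμ : ∀ r ∈ R, μ r = ∑ m ∈ r, (ξ m / ∑ m' ∈ r, ξ m') • θ m)
    (L : ℝ) (hL : 0 ≤ L)
    (hlip : ∀ i : V, ∀ y₁ y₂ : EuclideanSpace ℝ (Fin d),
      ‖gradient (fun y => 1 / (1 + ‖θ i - y‖ ^ 2)) y₁ -
          gradient (fun y => 1 / (1 + ‖θ i - y‖ ^ 2)) y₂‖ ≤ L * ‖y₁ - y₂‖) :
    -∑ p : V × V, P p *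
        ∑ M : Fin n → V, (∏ k, ξ (M k)) *
          Real.log (q p.1 p.2 / (q p.1 p.2 + ∑ k, q p.1 (M k))) ≤
    (-∑ p : V × V, P p *
        Real.log (q p.1 p.2 /
          (q p.1 p.2
            + n * ∑ r ∈ Rt, (∑ m ∈ r, ξ m) * (1 / (1 + ‖θ p.1 - μ r‖ ^ 2))
            + n * ∑ r ∈ R \ Rt,
                (∑ m ∈ r, ξ m) * ∑ m ∈ r, (ξ m / ∑ m' ∈ r, ξ m') * q p.1 m)))
      + (n * L / 2) * ∑ p : V × V, P p *
          ((∑ r ∈ Rt, (∑ m ∈ r, ξ m) *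
              ∑ m ∈ r, (ξ m / ∑ m' ∈ r, ξ m') * ‖θ m - μ r‖ ^ 2) / q p.1 p.2) :=
  nomad_loss_approximate_upper_bound_general d θ q hq P hP0 ξ hξ0 hξ1 n R hR hRpos Rt hRt μ hμ L hL
    hlip
end
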